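/- arXiv:2406.17879 — 7 statements merged into one kernel-verified Lean document; each statement's English description precedes it below -/
import Mathlib

section
/- Let A, B be complex m×n matrices and Δ = A⊗B − B⊗A. If Δz = 0 for some nonzero z ∈ ℂ^{n²}, then there exist a nonzero x ∈ ℂⁿ and scalars ν₁, ν₂ not both zero such that (ν₁A + ν₂B)x = 0. -/
open Matrix Kronecker

theorem stmt_1 {m n : ℕ} (A B : Matrix (Fin m) (Fin n) ℂ)
    (z : Fin n × Fin n → ℂ) (hz : z ≠ 0)
    (h : (A ⊗ₖ B - B ⊗ₖ A).mulVec z = 0) :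
    ∃ (x : Fin n → ℂ) (ν₁ ν₂ : ℂ), x ≠ 0 ∧ ¬(ν₁ = 0 ∧ ν₂ = 0) ∧
      (ν₁ • A + ν₂ • B).mulVec x = 0 := by
  by_cases hA : Function.Injective A.mulVecLin
  case neg =>
    rw [← LinearMap.ker_eq_bot] at hA
    obtain ⟨x, hx, hx0⟩ := Submodule.exists_mem_ne_zero_of_ne_bot hA
    refine ⟨x, 1, 0, hx0, by simp, ?_⟩
    have : A.mulVec x = 0 := hx
    simp [Matrix.add_mulVec, Matrix.smul_mulVec, this]
  by_cases hB : Function.Injective B.mulVecLin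
  case neg =>
    rw [← LinearMap.ker_eq_bot] at hB
    obtain ⟨x, hx, hx0⟩ := Submodule.exists_mem_ne_zero_of_ne_bot hB
    refine ⟨x, 0, 1, hx0, by simp, ?_⟩
    have : B.mulVec x = 0 := hx
    simp [Matrix.add_mulVec, Matrix.smul_mulVec, this]
  -- main case : both A and B injective
  set Z : Matrix (Fin n) (Fin n) ℂ := Matrix.of fun i j => z (i, j) with hZdef
  have hM : A * Z * Bᵀ = B * Z * Aᵀ := by
    ext i₁ i₂
    have h' := congrFun h (i₁, i₂)
    simp only [Matrix.sub_mulVec, Pi.sub_apply, Pi.zero_apply, sub_eq_zero] at h'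
    have e : ∀ (C D : Matrix (Fin m) (Fin n) ℂ),
        (C ⊗ₖ D).mulVec z (i₁, i₂) = (C * Z * Dᵀ) i₁ i₂ := by
      intro C D
      simp only [Matrix.mulVec, dotProduct, Fintype.sum_prod_type,
        Matrix.kroneckerMap_apply, Matrix.mul_apply, Matrix.transpose_apply,
        Finset.sum_mul, Finset.mul_sum, hZdef, Matrix.of_apply]
      rw [Finset.sum_comm]
      congr 1; ext j; congr 1; ext k; ring
    rw [← e A B, ← e B A, h']
  have hsurj : ∀ (C : Matrix (Fin m) (Fin n) ℂ), Function.Injective C.mulVecLin →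
      LinearMap.range Cᵀ.mulVecLin = ⊤ := by
    intro C hC
    apply Submodule.eq_top_of_finrank_eq
    have h1 : C.rank = n := by
      rw [Matrix.rank, LinearMap.finrank_range_of_inj hC]
      simp
    have h2 : Cᵀ.rank = n := by rw [Matrix.rank_transpose]; exact h1
    rw [Matrix.rank] at h2
    rw [h2]
    simp
  set fA := A.mulVecLin with hfA
  set fB := B.mulVecLin with hfB
  set V := LinearMap.range Z.mulVecLin with hV
  have hVne : V ≠ ⊥ := by
    obtain ⟨p, hp⟩ := Function.ne_iff.mp hz
    intro hbot
    have hZ0 : Z.mulVecLin (Pi.single p.2 1) = 0 := by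
      have : Z.mulVecLin (Pi.single p.2 1) ∈ V := LinearMap.mem_range_self _ _
      rw [hbot] at this
      simpa using this
    have : Z p.1 p.2 = 0 := by
      have := congrFun hZ0 p.1
      simpa [Matrix.mulVecLin_apply, Matrix.mulVec_single] using this
    simp only [hZdef, Matrix.of_apply] at this
    exact hp (by simpa using this)
  have key : V.map fA = V.map fB := by
    have gen : ∀ (C D : Matrix (Fin m) (Fin n) ℂ), Function.Injective D.mulVecLin →
        LinearMap.range (C * Z * Dᵀ).mulVecLin = V.map C.mulVecLin := by
      intro C D hD
      rw [Matrix.mulVecLin_mul, Matrix.mulVecLin_mul, LinearMap.range_comp,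
        hsurj D hD, Submodule.map_top, LinearMap.range_comp]
    rw [← gen A B hB, ← gen B A hA, hM]
  haveI : Nontrivial V := Submodule.nontrivial_iff_ne_bot.mpr hVne
  let eA := Submodule.equivMapOfInjective fA hA V
  let eB := Submodule.equivMapOfInjective fB hB V
  let T : Module.End ℂ V :=
    (eB.symm.toLinearMap ∘ₗ (LinearEquiv.ofEq _ _ key).toLinearMap) ∘ₗ eA.toLinearMap
  obtain ⟨c, hc⟩ := Module.End.exists_eigenvalue T
  obtain ⟨v, hv⟩ := hc.exists_hasEigenvector
  have h1 : T v = c • v := hv.apply_eq_smul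
  have h3 : (LinearEquiv.ofEq _ _ key) (eA v) = eB (c • v) := by
    have h2 : eB.symm ((LinearEquiv.ofEq _ _ key) (eA v)) = c • v := h1
    rw [← h2]
    simp
  have hveq : fA (v : Fin n → ℂ) = c • fB (v : Fin n → ℂ) := by
    have h4 := congrArg (Subtype.val) h3
    simpa [Submodule.coe_equivMapOfInjective_apply, eA, eB] using h4
  refine ⟨(v : Fin n → ℂ), 1, -c, ?_, by simp, ?_⟩
  · intro h0
    exact hv.2 (Subtype.coe_injective (by simpa using h0))
  · have hA' : A.mulVec (v : Fin n → ℂ) = c • B.mulVec (v : Fin n → ℂ) := hveq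
    simp [Matrix.add_mulVec, Matrix.neg_mulVec, Matrix.smul_mulVec, hA', neg_smul]
end

section
/- Let A, B be complex m×n matrices and Δ = A⊗B − B⊗A. If the null space of Δ is nonzero, then it contains a nonzero strongly decomposable vector, i.e., there exists a nonzero x ∈ ℂⁿ with Δ(x⊗x) = 0. -/
/-!
If some nonzero member `c • A + d • B` of the pencil kills a vector `x ≠ 0`, then `A x` and `B x`
are proportional, so `A x ⊗ B x = B x ⊗ A x` and `Δ (x ⊗ x) = 0`.

Otherwise `Δ` is injective. Writing `z = vec Z`, the equation `Δ z = 0` reads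
`A Z Bᵀ = B Z Aᵀ`. Here `A` is injective, with a left inverse `L`, and the subspace
`K = {v | B v ∈ range A}` is proper: else `L B` has an eigenvector `x` with `B x = μ A x`.
The equation forces the columns of `Z` and of `Zᵀ` into `K`, so `Z = P Y Pᵀ` for a basis matrix
`P` of `K`. With `T = L B P`, so that `A T = B P`, the smaller matrix `Y` solves
`P Y Tᵀ = T Y Pᵀ`, and the pencil of `P` and `T` again has only injective members.
Induction on the dimension gives `Y = 0`.
-/

open Matrix Kronecker

/-- Kronecker product of two vectors. -/
def kronVec {n : ℕ} (x y : Fin n → ℂ) : Fin n × Fin n → ℂ := fun p => x p.1 * y p.2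

namespace Matrix

section CommRing

variable {R : Type*} [CommRing R] {m n : Type*} [Fintype n]

lemma transpose_mul_mul_transpose_eq {A B : Matrix m n R} {Z : Matrix n n R}
    (hZ : A * Z * Bᵀ = B * Z * Aᵀ) : A * Zᵀ * Bᵀ = B * Zᵀ * Aᵀ := by
  simpa [Matrix.transpose_mul, Matrix.mul_assoc] using (congrArg transpose hZ).symm

variable [Fintype m] [DecidableEq n]

lemma eq_of_mul_mul_transpose_eq {A : Matrix m n R} {L : Matrix n m R} (hL : L * A = 1)
    {X Y : Matrix n n R} (h : A * X * Aᵀ = A * Y * Aᵀ) : X = Y := by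
  have hcancel (W : Matrix n n R) : L * (A * W * Aᵀ) * Lᵀ = W := by
    rw [← Matrix.mul_assoc, ← Matrix.mul_assoc, hL, Matrix.one_mul, Matrix.mul_assoc,
      ← Matrix.transpose_mul, hL, transpose_one, Matrix.mul_one]
  rw [← hcancel X, h, hcancel]

/-- For `L` a left inverse of `A`, the kernel of `A * L * B - B` is `{v | B *ᵥ v ∈ range A}`. -/
lemma sub_mul_eq_zero_of_mul_mul_transpose_eq {A B : Matrix m n R} {L : Matrix n m R}
    (hL : L * A = 1) {Z : Matrix n n R} (hZ : A * Z * Bᵀ = B * Z * Aᵀ) :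
    (A * L * B - B) * Z = 0 := by
  have h : (A * L * B - B) * Z * Aᵀ = 0 := by
    rw [Matrix.sub_mul, Matrix.sub_mul, Matrix.mul_assoc (A * L), Matrix.mul_assoc (A * L),
      ← hZ, ← Matrix.mul_assoc (A * L), ← Matrix.mul_assoc (A * L), Matrix.mul_assoc A L A, hL,
      Matrix.mul_one, sub_self]
  calc (A * L * B - B) * Z = (A * L * B - B) * Z * (L * A)ᵀ := by
        rw [hL, transpose_one, Matrix.mul_one]
    _ = 0 := by rw [transpose_mul, ← Matrix.mul_assoc, h, Matrix.zero_mul]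

end CommRing

variable {F : Type*} [Field F] {l m n : Type*} [Fintype n]

lemma exists_mul_eq_one_of_mulVec_eq_zero [Fintype m] [DecidableEq n] {A : Matrix m n F}
    (hA : ∀ x, A *ᵥ x = 0 → x = 0) : ∃ L : Matrix n m F, L * A = 1 := by
  classical
  obtain ⟨g, hg⟩ := A.mulVecLin.exists_leftInverse_of_injective (LinearMap.ker_eq_bot'.mpr hA)
  refine ⟨LinearMap.toMatrix' g, ?_⟩
  rw [← LinearMap.toMatrix'_toLin' A, ← LinearMap.toMatrix'_comp]
  exact (congrArg LinearMap.toMatrix' hg).trans LinearMap.toMatrix'_id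

lemma exists_ker_parametrization [DecidableEq n] {N : Matrix l n F} (hN : N ≠ 0) :
    ∃ k < Fintype.card n, ∃ (P : Matrix n (Fin k) F) (Q : Matrix (Fin k) n F),
      Q * P = 1 ∧ N * P = 0 ∧ ∀ v, N *ᵥ v = 0 → P *ᵥ (Q *ᵥ v) = v := by
  classical
  set K := LinearMap.ker N.mulVecLin
  have hK : K ≠ ⊤ := fun h => hN <| ext_iff_mulVec.mpr fun v => by
    simpa using LinearMap.congr_fun (LinearMap.ker_eq_top.mp h) v
  have hk : Module.finrank F K < Fintype.card n := by
    simpa using Submodule.finrank_lt hK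
  let e := (Module.finBasis F K).equivFun
  obtain ⟨r, hr⟩ := K.subtype.exists_leftInverse_of_injective K.ker_subtype
  have hr' (v : K) : r v = v := LinearMap.congr_fun hr v
  refine ⟨_, hk, LinearMap.toMatrix' (K.subtype ∘ₗ e.symm.toLinearMap),
    LinearMap.toMatrix' (e.toLinearMap ∘ₗ r), ?_, ?_, fun v hv => ?_⟩
  · rw [← LinearMap.toMatrix'_comp, ← LinearMap.toMatrix'_id]
    exact congrArg _ (LinearMap.ext fun y => by simp [hr'])
  · refine ext_iff_mulVec.mpr fun y => ?_
    rw [← mulVec_mulVec, LinearMap.toMatrix'_mulVec, zero_mulVec]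
    exact (e.symm y).2
  · simp [hr' ⟨v, hv⟩]

def PencilInjective (A B : Matrix m n F) : Prop :=
  ∀ c d : F, (c, d) ≠ 0 → ∀ x, (c • A + d • B) *ᵥ x = 0 → x = 0

namespace PencilInjective

lemma mulVec_eq_zero {A B : Matrix m n F} (hAB : PencilInjective A B) {x : n → F}
    (hx : A *ᵥ x = 0) : x = 0 :=
  hAB 1 0 (by simp) x (by simpa using hx)

lemma mul_mul_ne [Fintype m] [IsAlgClosed F] [DecidableEq n] [Nonempty n] {A B : Matrix m n F}
    (hAB : PencilInjective A B) (L : Matrix n m F) : A * L * B ≠ B := by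
  intro h
  obtain ⟨μ, hμ⟩ := Module.End.exists_eigenvalue (L * B).mulVecLin
  obtain ⟨x, hx⟩ := hμ.exists_hasEigenvector
  have hLBx : (L * B) *ᵥ x = μ • x := hx.apply_eq_smul
  have hBx : B *ᵥ x = μ • (A *ᵥ x) := by
    rw [← h, Matrix.mul_assoc, ← mulVec_mulVec, hLBx, mulVec_smul]
  refine hx.2 (hAB μ (-1) (by simp) x ?_)
  rw [add_mulVec, smul_mulVec, smul_mulVec, hBx]
  simp

lemma of_mul_eq_mul {k : Type*} [Fintype k] {A B : Matrix m n F} (hAB : PencilInjective A B)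
    {P T : Matrix n k F} (hP : ∀ y, P *ᵥ y = 0 → y = 0) (hAT : A * T = B * P) :
    PencilInjective P T := by
  intro c d hcd y hy
  have hpencil : (c • A + d • B) * P = A * (c • P + d • T) := by
    rw [Matrix.add_mul, Matrix.mul_add, Matrix.smul_mul, Matrix.smul_mul, Matrix.mul_smul,
      Matrix.mul_smul, hAT]
  refine hP y (hAB c d hcd _ ?_)
  rw [mulVec_mulVec, hpencil, ← mulVec_mulVec, hy, mulVec_zero]

lemma exists_reduction [Fintype m] [IsAlgClosed F] [DecidableEq n] [Nonempty n]
    {A B : Matrix m n F} (hAB : PencilInjective A B) :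
    ∃ k < Fintype.card n, ∃ P T : Matrix n (Fin k) F, PencilInjective P T ∧
      ∀ Z : Matrix n n F, A * Z * Bᵀ = B * Z * Aᵀ →
        ∃ Y : Matrix (Fin k) (Fin k) F, P * Y * Tᵀ = T * Y * Pᵀ ∧ Z = P * Y * Pᵀ := by
  obtain ⟨L, hL⟩ := exists_mul_eq_one_of_mulVec_eq_zero fun _ => hAB.mulVec_eq_zero
  obtain ⟨k, hk, P, Q, hQP, hNP, hPQ⟩ :=
    exists_ker_parametrization (sub_ne_zero.mpr (hAB.mul_mul_ne L))
  have hP (y) (hy : P *ᵥ y = 0) : y = 0 := by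
    simpa [hQP] using congrArg (Q *ᵥ ·) hy
  have hAT : A * (L * B * P) = B * P := by
    rw [← sub_eq_zero, ← Matrix.mul_assoc, ← Matrix.mul_assoc, ← Matrix.sub_mul, hNP]
  have hPQ_mul (W : Matrix n n F) (hW : (A * L * B - B) * W = 0) : P * Q * W = W :=
    ext_iff_mulVec.mpr fun v => by
      rw [← mulVec_mulVec, ← mulVec_mulVec, hPQ _ (by rw [mulVec_mulVec, hW, zero_mulVec])]
  refine ⟨k, hk, P, L * B * P, hAB.of_mul_eq_mul hP hAT, fun Z hZ => ?_⟩
  have hZ₁ := hPQ_mul Z (sub_mul_eq_zero_of_mul_mul_transpose_eq hL hZ)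
  have hZ₂ := hPQ_mul Zᵀ
    (sub_mul_eq_zero_of_mul_mul_transpose_eq hL (transpose_mul_mul_transpose_eq hZ))
  set Y := Q * Z * Qᵀ
  have hZY : Z = P * Y * Pᵀ := by
    calc Z = P * Q * (P * Q * Zᵀ)ᵀ := by rw [hZ₂, transpose_transpose, hZ₁]
      _ = P * Y * Pᵀ := by simp only [Y, transpose_mul, transpose_transpose, Matrix.mul_assoc]
  refine ⟨Y, eq_of_mul_mul_transpose_eq hL ?_, hZY⟩
  rw [hZY] at hZ
  calc A * (P * Y * (L * B * P)ᵀ) * Aᵀ = A * P * Y * (A * (L * B * P))ᵀ := by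
        simp only [transpose_mul, Matrix.mul_assoc]
    _ = A * (P * Y * Pᵀ) * Bᵀ := by rw [hAT]; simp only [transpose_mul, Matrix.mul_assoc]
    _ = B * (P * Y * Pᵀ) * Aᵀ := hZ
    _ = A * (L * B * P) * Y * Pᵀ * Aᵀ := by rw [hAT]; simp only [Matrix.mul_assoc]
    _ = A * (L * B * P * Y * Pᵀ) * Aᵀ := by simp only [Matrix.mul_assoc]

theorem eq_zero_of_mul_mul_transpose_eq [IsAlgClosed F] {m n : ℕ}
    {A B : Matrix (Fin m) (Fin n) F} (hAB : PencilInjective A B) {Z : Matrix (Fin n) (Fin n) F}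
    (hZ : A * Z * Bᵀ = B * Z * Aᵀ) : Z = 0 := by
  induction n using Nat.strong_induction_on generalizing m with
  | _ n ih =>
    rcases isEmpty_or_nonempty (Fin n) with hn | hn
    · exact Subsingleton.elim _ _
    obtain ⟨k, hk, P, T, hPT, hred⟩ := hAB.exists_reduction
    obtain ⟨Y, hY, rfl⟩ := hred Z hZ
    rw [ih k (by simpa using hk) hPT hY, Matrix.mul_zero, Matrix.zero_mul]

theorem eq_zero_of_kronecker_sub_mulVec_eq_zero [IsAlgClosed F] {m n : ℕ}
    {A B : Matrix (Fin m) (Fin n) F} (hAB : PencilInjective A B) {z : Fin n × Fin n → F}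
    (hz : (A ⊗ₖ B - B ⊗ₖ A) *ᵥ z = 0) : z = 0 := by
  have hzX : z = vec (of fun i j => z (j, i)) := rfl
  rw [hzX, sub_mulVec, kronecker_mulVec_vec, kronecker_mulVec_vec, sub_eq_zero, vec_inj] at hz
  rw [hzX, hAB.eq_zero_of_mul_mul_transpose_eq hz.symm, vec_zero]

end PencilInjective

end Matrix

lemma kronecker_mulVec_kronVec {m n : ℕ} (A B : Matrix (Fin m) (Fin n) ℂ) (x y : Fin n → ℂ) :
    (A ⊗ₖ B) *ᵥ kronVec x y = kronVec (A *ᵥ x) (B *ᵥ y) := by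
  ext ⟨i, j⟩
  simp only [kronVec, mulVec, dotProduct, kroneckerMap_apply, Fintype.sum_prod_type,
    Finset.sum_mul_sum]
  exact Finset.sum_congr rfl fun _ _ => Finset.sum_congr rfl fun _ _ => by ring

lemma kronVec_comm_of_smul_add_smul_eq_zero {m : ℕ} {u w : Fin m → ℂ} {c d : ℂ}
    (hcd : (c, d) ≠ 0) (h : c • u + d • w = 0) : kronVec u w = kronVec w u := by
  ext ⟨i, j⟩
  have hi : c * u i + d * w i = 0 := by simpa using congrFun h i
  have hj : c * u j + d * w j = 0 := by simpa using congrFun h j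
  have hc : c * (u i * w j - w i * u j) = 0 := by linear_combination w j * hi - w i * hj
  have hd : d * (u i * w j - w i * u j) = 0 := by linear_combination u i * hj - u j * hi
  by_cases hc0 : c = 0
  · have hd0 : d ≠ 0 := fun hd0 => hcd (by simp [hc0, hd0])
    simpa [kronVec, sub_eq_zero] using (mul_eq_zero.mp hd).resolve_left hd0
  · simpa [kronVec, sub_eq_zero] using (mul_eq_zero.mp hc).resolve_left hc0

theorem stmt_2 {m n : ℕ} (A B : Matrix (Fin m) (Fin n) ℂ)
    (h : ∃ z : Fin n × Fin n → ℂ, z ≠ 0 ∧ (A ⊗ₖ B - B ⊗ₖ A).mulVec z = 0) :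
    ∃ x : Fin n → ℂ, x ≠ 0 ∧ (A ⊗ₖ B - B ⊗ₖ A).mulVec (kronVec x x) = 0 := by
  obtain ⟨z, hz0, hz⟩ := h
  by_cases hAB : PencilInjective A B
  · exact absurd (hAB.eq_zero_of_kronecker_sub_mulVec_eq_zero hz) hz0
  simp only [PencilInjective, not_forall] at hAB
  obtain ⟨c, d, hcd, x, hx, hx0⟩ := hAB
  refine ⟨x, hx0, ?_⟩
  have hdep : c • (A *ᵥ x) + d • (B *ᵥ x) = 0 := by
    rwa [add_mulVec, smul_mulVec, smul_mulVec] at hx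
  rw [sub_mulVec, kronecker_mulVec_kronVec, kronecker_mulVec_kronVec,
    kronVec_comm_of_smul_add_smul_eq_zero hcd hdep, sub_self]
end

section
/- Let A, B be complex m×n matrices and Δ = A⊗B − B⊗A. If the null space of Δ has dimension one, then every element of the null space is a scalar multiple of a strongly decomposable vector x⊗x for some x ∈ ℂⁿ. -/
/-!
If `x ≠ 0` and `A x`, `B x` are linearly dependent, then `x ⊗ x` lies in the null space of
`A ⊗ B - B ⊗ A`, and spans it when that null space is a line. Such an `x` exists as soon as there
is a nonzero null vector `vec X`, i.e. `A X Bᵀ = B X Aᵀ` with `X ≠ 0`: either `A` has a kernel, or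
`Aᵀ` is surjective and the relation gives `B (range X) ⊆ A (range X)`; then `A⁻¹ B` is an
endomorphism of `range X`, and any eigenvector of it (`ℂ` being algebraically closed) will do.
-/

open Matrix Kronecker

theorem LinearMap.exists_apply_eq_smul_apply_of_map_le_map {K V W : Type*} [Field K]
    [IsAlgClosed K] [AddCommGroup V] [Module K V] [FiniteDimensional K V] [AddCommGroup W]
    [Module K W] {f g : V →ₗ[K] W} (hf : Function.Injective f) {U : Submodule K V}
    (hU : U ≠ ⊥) (hgU : U.map g ≤ U.map f) :
    ∃ u ∈ U, u ≠ 0 ∧ ∃ γ : K, g u = γ • f u := by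
  have : Nontrivial U := Submodule.nontrivial_iff_ne_bot.mpr hU
  let e := Submodule.equivMapOfInjective f hf U
  let gU : U →ₗ[K] U.map f :=
    (g.domRestrict U).codRestrict (U.map f) fun u => hgU (Submodule.mem_map_of_mem u.2)
  obtain ⟨γ, hγ⟩ := Module.End.exists_eigenvalue (e.symm.toLinearMap ∘ₗ gU)
  obtain ⟨u, hu, hu0⟩ := hγ.exists_hasEigenvector
  refine ⟨u, u.2, by simpa using hu0, γ, ?_⟩
  simpa [e, gU] using congrArg (fun w : U => (e w : W)) (Module.End.mem_eigenspace_iff.mp hu)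

namespace Matrix

section CommRing

variable {R : Type*} [CommRing R] {m n : Type*} [Fintype n]

theorem vec_mem_ker_kronecker_sub_iff (A B : Matrix m n R) (X : Matrix n n R) :
    vec X ∈ LinearMap.ker (A ⊗ₖ B - B ⊗ₖ A).mulVecLin ↔ A * X * Bᵀ = B * X * Aᵀ := by
  rw [LinearMap.mem_ker, mulVecLin_apply, sub_mulVec, kronecker_mulVec_vec,
    kronecker_mulVec_vec, sub_eq_zero, vec_inj, eq_comm]

theorem mul_vecMulVec_mul_transpose (A B : Matrix m n R) (x y : n → R) :
    A * vecMulVec x y * Bᵀ = vecMulVec (A *ᵥ x) (B *ᵥ y) := by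
  rw [mul_vecMulVec, vecMulVec_mul, vecMul_transpose]

theorem vec_vecMulVec_mem_ker_of_mulVec_eq_zero {A : Matrix m n R} (B : Matrix m n R)
    {x : n → R} (hx : A *ᵥ x = 0) :
    vec (vecMulVec x x) ∈ LinearMap.ker (A ⊗ₖ B - B ⊗ₖ A).mulVecLin := by
  rw [vec_mem_ker_kronecker_sub_iff, mul_vecMulVec_mul_transpose, mul_vecMulVec_mul_transpose, hx,
    vecMulVec_zero, zero_vecMulVec]

theorem vec_vecMulVec_mem_ker_of_mulVec_eq_smul {A B : Matrix m n R} {x : n → R} {γ : R}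
    (hx : B *ᵥ x = γ • A *ᵥ x) :
    vec (vecMulVec x x) ∈ LinearMap.ker (A ⊗ₖ B - B ⊗ₖ A).mulVecLin := by
  rw [vec_mem_ker_kronecker_sub_iff, mul_vecMulVec_mul_transpose, mul_vecMulVec_mul_transpose, hx,
    vecMulVec_smul, smul_vecMulVec]

end CommRing

section Field

variable {K : Type*} [Field K] {m n : Type*} [Fintype m] [Fintype n]

theorem mulVec_transpose_surjective {A : Matrix m n K} (hA : Function.Injective A.mulVec) :
    Function.Surjective Aᵀ.mulVec := by
  have hrank : Aᵀ.rank = Module.finrank K (n → K) := by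
    rw [rank_transpose, rank]
    exact LinearMap.finrank_range_of_inj hA
  exact LinearMap.range_eq_top.mp (Submodule.eq_top_of_finrank_eq hrank)

theorem exists_mulVec_eq_smul_mulVec [IsAlgClosed K] {A B : Matrix m n K}
    (hA : Function.Injective A.mulVec) {X : Matrix n n K} (hX₀ : X ≠ 0)
    (hX : A * X * Bᵀ = B * X * Aᵀ) : ∃ x ≠ 0, ∃ γ : K, B *ᵥ x = γ • A *ᵥ x := by
  have hU : LinearMap.range X.mulVecLin ≠ ⊥ := by
    rw [Ne, LinearMap.range_eq_bot]
    exact fun h => hX₀ (mulVec_injective (funext fun v => by simpa using LinearMap.congr_fun h v))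
  have hBU : (LinearMap.range X.mulVecLin).map B.mulVecLin ≤
      (LinearMap.range X.mulVecLin).map A.mulVecLin := by
    rintro _ ⟨_, ⟨v, rfl⟩, rfl⟩
    obtain ⟨u, rfl⟩ := mulVec_transpose_surjective hA v
    refine ⟨X *ᵥ (Bᵀ *ᵥ u), ⟨_, rfl⟩, ?_⟩
    simp only [mulVecLin_apply, mulVec_mulVec, ← Matrix.mul_assoc, hX]
  obtain ⟨x, -, hx, γ, hγ⟩ := LinearMap.exists_apply_eq_smul_apply_of_map_le_map hA hU hBU
  exact ⟨x, hx, γ, hγ⟩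

theorem exists_vec_vecMulVec_mem_ker [IsAlgClosed K] {A B : Matrix m n K}
    (h : LinearMap.ker (A ⊗ₖ B - B ⊗ₖ A).mulVecLin ≠ ⊥) :
    ∃ x ≠ 0, vec (vecMulVec x x) ∈ LinearMap.ker (A ⊗ₖ B - B ⊗ₖ A).mulVecLin := by
  by_cases hA : Function.Injective A.mulVec
  · obtain ⟨z, hz, hz₀⟩ := Submodule.exists_mem_ne_zero_of_ne_bot h
    obtain ⟨X, rfl⟩ := vec_bijective.surjective z
    obtain ⟨x, hx, γ, hγ⟩ := exists_mulVec_eq_smul_mulVec hA (by simpa [vec_eq_zero_iff] using hz₀)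
      ((vec_mem_ker_kronecker_sub_iff A B X).mp hz)
    exact ⟨x, hx, vec_vecMulVec_mem_ker_of_mulVec_eq_smul hγ⟩
  · obtain ⟨x, hAx, hx⟩ : ∃ x, A *ᵥ x = 0 ∧ x ≠ 0 := by
      rw [← coe_mulVecLin, injective_iff_map_eq_zero] at hA
      simpa using hA
    exact ⟨x, hx, vec_vecMulVec_mem_ker_of_mulVec_eq_zero B hAx⟩

end Field

end Matrix

theorem stmt_3 {m n : ℕ} (A B : Matrix (Fin m) (Fin n) ℂ)
    (h : Module.finrank ℂ (LinearMap.ker (A ⊗ₖ B - B ⊗ₖ A).mulVecLin) = 1) :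
    ∃ x : Fin n → ℂ, ∀ z ∈ LinearMap.ker (A ⊗ₖ B - B ⊗ₖ A).mulVecLin,
      ∃ α : ℂ, z = α • kronVec x x := by
  have hker : LinearMap.ker (A ⊗ₖ B - B ⊗ₖ A).mulVecLin ≠ ⊥ :=
    Submodule.one_le_finrank_iff.mp h.ge
  obtain ⟨x, hx, hxK⟩ := exists_vec_vecMulVec_mem_ker hker
  have hkron : kronVec x x = vec (vecMulVec x x) := funext fun _ => mul_comm _ _
  have hkron₀ : (⟨kronVec x x, hkron ▸ hxK⟩ : LinearMap.ker _) ≠ 0 := by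
    simp [hkron, vec_eq_zero_iff, hx]
  refine ⟨x, fun z hz => ?_⟩
  obtain ⟨α, hα⟩ := (finrank_eq_one_iff_of_nonzero' _ hkron₀).mp h ⟨z, hz⟩
  exact ⟨α, congrArg Subtype.val hα.symm⟩
end

section
/- Let A₀, A₁, A₂ be complex m×n matrices with m > n and suppose (λ₀A₀ + λ₁A₁ + λ₂A₂)x = 0 for some nonzero x ∈ ℂⁿ and (λ₀,λ₁,λ₂) ≠ 0. Define Δ₀ = A₁⊗A₂ − A₂⊗A₁, Δ₁ = A₂⊗A₀ − A₀⊗A₂, Δ₂ = A₀⊗A₁ − A₁⊗A₀. Then (λᵢΔⱼ − λⱼΔᵢ)(x⊗x) = 0 for all (i,j) ∈ {(0,1),(0,2),(1,2)}. -/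
open Matrix Kronecker

lemma kron_mulVec_aux {m n : ℕ} (A B : Matrix (Fin m) (Fin n) ℂ) (x y : Fin n → ℂ)
    (p : Fin m × Fin m) :
    (A ⊗ₖ B).mulVec (kronVec x y) p = A.mulVec x p.1 * B.mulVec y p.2 := by
  simp only [Matrix.mulVec, dotProduct, kroneckerMap_apply, kronVec,
    Fintype.sum_prod_type]
  rw [Finset.sum_mul_sum]
  apply Finset.sum_congr rfl
  intro i _
  apply Finset.sum_congr rfl
  intro j _
  ring

theorem stmt_4 {m n : ℕ} (hmn : m > n) (A₀ A₁ A₂ : Matrix (Fin m) (Fin n) ℂ)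
    (l₀ l₁ l₂ : ℂ) (hl : ¬(l₀ = 0 ∧ l₁ = 0 ∧ l₂ = 0))
    (x : Fin n → ℂ) (hx : x ≠ 0)
    (h : (l₀ • A₀ + l₁ • A₁ + l₂ • A₂).mulVec x = 0) :
    (l₀ • (A₂ ⊗ₖ A₀ - A₀ ⊗ₖ A₂) - l₁ • (A₁ ⊗ₖ A₂ - A₂ ⊗ₖ A₁)).mulVec (kronVec x x) = 0 ∧
    (l₀ • (A₀ ⊗ₖ A₁ - A₁ ⊗ₖ A₀) - l₂ • (A₁ ⊗ₖ A₂ - A₂ ⊗ₖ A₁)).mulVec (kronVec x x) = 0 ∧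
    (l₁ • (A₀ ⊗ₖ A₁ - A₁ ⊗ₖ A₀) - l₂ • (A₂ ⊗ₖ A₀ - A₀ ⊗ₖ A₂)).mulVec (kronVec x x) = 0 := by
  set u := A₀.mulVec x with hu
  set v := A₁.mulVec x with hv
  set w := A₂.mulVec x with hw
  have h' : ∀ i, l₀ * u i + l₁ * v i + l₂ * w i = 0 := by
    intro i
    have := congrFun h i
    simpa [Matrix.add_mulVec, Matrix.smul_mulVec, hu, hv, hw] using this
  refine ⟨?_, ?_, ?_⟩ <;> funext p <;>
    simp only [Matrix.sub_mulVec, Matrix.smul_mulVec, kron_mulVec_aux,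
      Pi.sub_apply, Pi.smul_apply, Pi.zero_apply, smul_eq_mul, ← hu, ← hv, ← hw]
  · linear_combination w p.1 * h' p.2 - w p.2 * h' p.1
  · linear_combination v p.2 * h' p.1 - v p.1 * h' p.2
  · linear_combination u p.1 * h' p.2 - u p.2 * h' p.1
end

section
/- Let A₀, A₁, A₂ be complex m×n matrices and Δ₀ = A₁⊗A₂ − A₂⊗A₁, Δ₁ = A₂⊗A₀ − A₀⊗A₂. If (μ₀Δ₁ − μ₁Δ₀)z = 0 for some nonzero z ∈ ℂ^{n²} and (μ₀,μ₁) ≠ (0,0), then there exist scalars λ₀, λ₁, λ₂ not all zero and a nonzero x ∈ ℂⁿ with (λ₀A₀ + λ₁A₁ + λ₂A₂)x = 0. -/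
/-!
Put `B = μ₀A₀ + μ₁A₁` and write `z = vec X`. The hypothesis becomes `B X A₂ᵀ = A₂ X Bᵀ` with
`X ≠ 0`. If `B` has a kernel we are done; otherwise `B` has a left inverse `P`, and
`A₂ Xᵀ = B Xᵀ N` with `N = (P A₂)ᵀ`. Then `ker (B Xᵀ)` is `N`-invariant, and an eigenvector `u`
of `N` modulo this kernel, with eigenvalue `c`, gives `x = Xᵀ u ≠ 0` with `A₂ x = c B x`.
-/

open Matrix Kronecker

theorem Matrix.exists_mul_eq_one_of_mulVec_injective {K m n : Type*} [Field K] [Fintype m]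
    [Fintype n] [DecidableEq n] {B : Matrix m n K} (hB : Function.Injective B.mulVec) :
    ∃ P : Matrix n m K, P * B = 1 := by
  classical
  obtain ⟨g, hg⟩ := B.mulVecLin.exists_leftInverse_of_injective (LinearMap.ker_eq_bot.mpr hB)
  refine ⟨LinearMap.toMatrix' g, ?_⟩
  simpa [LinearMap.toMatrix'_comp, ← Matrix.toLin'_apply'] using congrArg LinearMap.toMatrix' hg

open LinearMap in
theorem LinearMap.exists_apply_comp_eq_smul_of_ker_le {K V U : Type*} [Field K] [IsAlgClosed K]
    [AddCommGroup V] [Module K V] [FiniteDimensional K V] [AddCommGroup U] [Module K U]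
    {f : V →ₗ[K] U} (hf : f ≠ 0) {N : V →ₗ[K] V} (hN : ker f ≤ ker (f ∘ₗ N)) :
    ∃ (u : V) (c : K), f u ≠ 0 ∧ f (N u) = c • f u := by
  have hinv : ker f ≤ (ker f).comap N := hN
  have : Nontrivial (V ⧸ ker f) :=
    Submodule.Quotient.nontrivial_iff.mpr fun h => hf (ker_eq_top.mp h)
  obtain ⟨c, hc⟩ := Module.End.exists_eigenvalue ((ker f).mapQ (ker f) N hinv)
  obtain ⟨v, hv⟩ := hc.exists_hasEigenvector
  obtain ⟨u, rfl⟩ := Submodule.Quotient.mk_surjective _ v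
  have hNu : N u - c • u ∈ ker f := by
    rw [← Submodule.Quotient.eq, ← Submodule.mapQ_apply (h := hinv)]
    exact hv.apply_eq_smul
  refine ⟨u, c, fun hu => hv.2 ((Submodule.Quotient.mk_eq_zero _).mpr hu), ?_⟩
  rwa [mem_ker, map_sub, map_smul, sub_eq_zero] at hNu

theorem Matrix.exists_smul_add_smul_mulVec_eq_zero {K m n : Type*} [Field K] [IsAlgClosed K]
    [Fintype m] [Fintype n] [DecidableEq n] {B C : Matrix m n K} {X : Matrix n n K}
    (hX : X ≠ 0) (h : B * X * Cᵀ = C * X * Bᵀ) :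
    ∃ (a b : K) (x : n → K), (a ≠ 0 ∨ b ≠ 0) ∧ x ≠ 0 ∧ (a • B + b • C) *ᵥ x = 0 := by
  by_cases hB : Function.Injective B.mulVec
  swap
  · obtain ⟨x, hBx, hx⟩ : ∃ x, B *ᵥ x = 0 ∧ x ≠ 0 := by
      contrapose! hB
      exact (injective_iff_map_eq_zero B.mulVecLin).mpr hB
    exact ⟨1, 0, x, by simp, hx, by simpa using hBx⟩
  obtain ⟨P, hPB⟩ := exists_mul_eq_one_of_mulVec_injective hB
  have hXP : Xᵀ = P * (B * Xᵀ) := by rw [← Matrix.mul_assoc, hPB, Matrix.one_mul]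
  have hCX : C * Xᵀ = B * Xᵀ * (P * C)ᵀ :=
    calc C * Xᵀ = (P * (B * X * Cᵀ))ᵀ := by
          rw [← Matrix.mul_assoc, ← Matrix.mul_assoc, hPB, Matrix.one_mul, transpose_mul,
            transpose_transpose]
      _ = (P * (C * X * Bᵀ))ᵀ := by rw [h]
      _ = B * Xᵀ * (P * C)ᵀ := by simp only [transpose_mul, transpose_transpose, Matrix.mul_assoc]
  have hBX : (B * Xᵀ).mulVecLin ≠ 0 := by
    rw [← Matrix.toLin'_apply', ne_eq, LinearEquiv.map_eq_zero_iff]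
    intro h0
    apply hX
    rw [← transpose_eq_zero, hXP, h0, Matrix.mul_zero]
  have hker : LinearMap.ker (B * Xᵀ).mulVecLin ≤
      LinearMap.ker ((B * Xᵀ).mulVecLin ∘ₗ (P * C)ᵀ.mulVecLin) := by
    intro v hv
    simp only [LinearMap.mem_ker, LinearMap.comp_apply, mulVecLin_apply, mulVec_mulVec] at hv ⊢
    rw [← hCX, hXP, ← Matrix.mul_assoc, ← mulVec_mulVec, hv, mulVec_zero]
  obtain ⟨u, c, hu, hc⟩ := LinearMap.exists_apply_comp_eq_smul_of_ker_le hBX hker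
  refine ⟨-c, 1, Xᵀ *ᵥ u, by simp, fun hu0 => hu ?_, ?_⟩
  · rw [mulVecLin_apply, ← mulVec_mulVec, hu0, mulVec_zero]
  · simp only [mulVecLin_apply, mulVec_mulVec] at hc
    rw [add_mulVec, smul_mulVec, one_smul, mulVec_mulVec, mulVec_mulVec, hCX, hc, neg_smul,
      neg_add_cancel]

theorem stmt_5 {m n : ℕ} (A₀ A₁ A₂ : Matrix (Fin m) (Fin n) ℂ)
    (μ₀ μ₁ : ℂ) (hμ : ¬(μ₀ = 0 ∧ μ₁ = 0))
    (z : Fin n × Fin n → ℂ) (hz : z ≠ 0)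
    (h : (μ₀ • (A₂ ⊗ₖ A₀ - A₀ ⊗ₖ A₂) - μ₁ • (A₁ ⊗ₖ A₂ - A₂ ⊗ₖ A₁)).mulVec z = 0) :
    ∃ (l₀ l₁ l₂ : ℂ) (x : Fin n → ℂ), ¬(l₀ = 0 ∧ l₁ = 0 ∧ l₂ = 0) ∧ x ≠ 0 ∧
      (l₀ • A₀ + l₁ • A₁ + l₂ • A₂).mulVec x = 0 := by
  set B := μ₀ • A₀ + μ₁ • A₁
  obtain ⟨X, rfl⟩ := vec_bijective.surjective z
  have hX : X ≠ 0 := by rintro rfl; exact hz vec_zero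
  have hBX : B * X * A₂ᵀ = A₂ * X * Bᵀ := by
    have hpencil : μ₀ • (A₂ ⊗ₖ A₀ - A₀ ⊗ₖ A₂) - μ₁ • (A₁ ⊗ₖ A₂ - A₂ ⊗ₖ A₁) =
        A₂ ⊗ₖ B - B ⊗ₖ A₂ := by
      simp only [B, kronecker_add, add_kronecker, kronecker_smul, smul_kronecker, smul_sub]
      abel
    rwa [hpencil, sub_mulVec, kronecker_mulVec_vec, kronecker_mulVec_vec, sub_eq_zero,
      vec_inj] at h
  obtain ⟨a, b, x, hab, hx, hABx⟩ := exists_smul_add_smul_mulVec_eq_zero hX hBX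
  refine ⟨a * μ₀, a * μ₁, b, x, ?_, hx, ?_⟩
  · rintro ⟨h₀, h₁, rfl⟩
    have ha : a ≠ 0 := hab.resolve_right (not_not.mpr rfl)
    exact hμ ⟨(mul_eq_zero.mp h₀).resolve_left ha, (mul_eq_zero.mp h₁).resolve_left ha⟩
  · simpa only [B, smul_add, smul_smul] using hABx
end

section
/- Let A, B ∈ ℂ^{m×n} and Δ = A⊗B − B⊗A. If Δz = 0 for z = vec(Z), then Δ z_sym = 0 and Δ z_skew = 0, where z_sym = (1/2)vec(Z + Zᵀ) and z_skew = (1/2)vec(Z − Zᵀ). -/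
open Matrix Kronecker

/-- Column-stacking vectorization. -/
def vecM {n : ℕ} (Z : Matrix (Fin n) (Fin n) ℂ) : Fin n × Fin n → ℂ :=
  fun p => Z p.2 p.1

lemma vec_transpose_flip {m n : ℕ} (A B : Matrix (Fin m) (Fin n) ℂ)
    (Z : Matrix (Fin n) (Fin n) ℂ) (i j : Fin m) :
    ((A ⊗ₖ B - B ⊗ₖ A).mulVec (vecM Zᵀ)) (i, j) =
      -(((A ⊗ₖ B - B ⊗ₖ A).mulVec (vecM Z)) (j, i)) := by
  simp only [mulVec, dotProduct, Matrix.sub_apply, kroneckerMap_apply, vecM,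
    Fintype.sum_prod_type, transpose_apply, sub_mul, Finset.sum_sub_distrib, neg_sub]
  rw [Finset.sum_comm (f := fun k l => A j k * B i l * Z l k),
      Finset.sum_comm (f := fun k l => B j k * A i l * Z l k)]
  congr 1 <;> · congr 1; ext k; congr 1; ext l; ring

lemma vec_transpose_zero {m n : ℕ} (A B : Matrix (Fin m) (Fin n) ℂ)
    (Z : Matrix (Fin n) (Fin n) ℂ)
    (h : (A ⊗ₖ B - B ⊗ₖ A).mulVec (vecM Z) = 0) :
    (A ⊗ₖ B - B ⊗ₖ A).mulVec (vecM Zᵀ) = 0 := by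
  funext p
  obtain ⟨i, j⟩ := p
  rw [vec_transpose_flip, h]
  simp

theorem stmt_13 {m n : ℕ} (A B : Matrix (Fin m) (Fin n) ℂ)
    (Z : Matrix (Fin n) (Fin n) ℂ)
    (h : (A ⊗ₖ B - B ⊗ₖ A).mulVec (vecM Z) = 0) :
    (A ⊗ₖ B - B ⊗ₖ A).mulVec ((2 : ℂ)⁻¹ • vecM (Z + Zᵀ)) = 0 ∧
    (A ⊗ₖ B - B ⊗ₖ A).mulVec ((2 : ℂ)⁻¹ • vecM (Z - Zᵀ)) = 0 := by
  have ht := vec_transpose_zero A B Z h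
  have hadd : vecM (Z + Zᵀ) = vecM Z + vecM Zᵀ := rfl
  have hsub : vecM (Z - Zᵀ) = vecM Z - vecM Zᵀ := rfl
  constructor <;>
    simp [hadd, hsub, mulVec_smul, mulVec_add, mulVec_sub, h, ht]
end

section
/- The commutation matrix satisfies K^n = (S_D^n)ᵀS_D^n + (S_L^n)ᵀS_U^n + (S_U^n)ᵀS_L^n, where S_D^n, S_L^n, S_U^n are the diagonal, strictly lower, and strictly upper triangular selection matrices. -/
open Matrix

/-- The commutation matrix `K^n`. -/
def commMat (n : ℕ) : Matrix (Fin n × Fin n) (Fin n × Fin n) ℝ :=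
  fun p q => if q = (p.2, p.1) then 1 else 0

/-- Index set for strictly lower triangular positions (cardinality `n(n-1)/2`). -/
def LowIdx (n : ℕ) := {p : Fin n × Fin n // p.1 < p.2}

instance (n : ℕ) : Fintype (LowIdx n) := by unfold LowIdx; infer_instance
instance (n : ℕ) : DecidableEq (LowIdx n) := by unfold LowIdx; infer_instance

/-- The diagonal selection matrix `S_D^n`. -/
def selD (n : ℕ) : Matrix (Fin n) (Fin n × Fin n) ℝ :=
  fun i q => if q = (i, i) then 1 else 0

/-- The strictly-lower-triangular selection matrix `S_L^n`. -/
def selL (n : ℕ) : Matrix (LowIdx n) (Fin n × Fin n) ℝ :=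
  fun k q => if q = k.val then 1 else 0

/-- The strictly-upper-triangular selection matrix `S_U^n`. -/
def selU (n : ℕ) : Matrix (LowIdx n) (Fin n × Fin n) ℝ :=
  fun k q => if q = (k.val.2, k.val.1) then 1 else 0

/-!
Each product `(S_X)ᵀ S_Y` of two selection matrices is a partial permutation matrix:
`(S_D)ᵀ S_D`, `(S_L)ᵀ S_U` and `(S_U)ᵀ S_L` send `(i, j)` to `(j, i)` on the diagonal, the
positions with `i < j` and those with `j < i` respectively, and vanish elsewhere. By trichotomy
these three regions partition the index set, so the sum is `K^n`.
-/

section Selection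

variable {ι κ R : Type*} [Fintype ι] [DecidableEq κ] [NonAssocSemiring R]

def selection (f : ι → κ) : Matrix ι κ R := of fun i q => if q = f i then 1 else 0

theorem selection_transpose_mul_selection_apply {f : ι → κ} (hf : f.Injective) (g : ι → κ)
    (p q : κ) {P : Prop} [Decidable P] (hP : (∃ i, f i = p ∧ g i = q) ↔ P) :
    ((selection f : Matrix ι κ R)ᵀ * (selection g : Matrix ι κ R)) p q =
      if P then 1 else 0 := by
  simp only [mul_apply, transpose_apply, selection, of_apply]
  by_cases hp : ∃ i, f i = p
  · obtain ⟨i, rfl⟩ := hp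
    have hPi : P ↔ q = g i := hP.symm.trans
      ⟨fun ⟨j, hj, hq⟩ => hf hj ▸ hq.symm, fun hq => ⟨i, rfl, hq.symm⟩⟩
    rw [Fintype.sum_eq_single i fun j hj => by simp [hf.ne (Ne.symm hj)]]
    simp [hPi]
  · rw [if_neg fun h => hp ((hP.mpr h).imp fun _ => And.left)]
    exact Finset.sum_eq_zero fun i _ => by
      simp [show p ≠ f i from fun h => hp ⟨i, h.symm⟩]

end Selection

section Commutation

variable {n : ℕ}

theorem selD_transpose_mul_selD_apply (p q : Fin n × Fin n) :
    ((selD n)ᵀ * selD n) p q = if p.1 = p.2 ∧ q = (p.2, p.1) then 1 else 0 :=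
  selection_transpose_mul_selection_apply (f := fun i => (i, i))
    (fun _ _ h => (Prod.ext_iff.mp h).1) (fun i => (i, i)) p q <| by
    constructor
    · rintro ⟨i, rfl, rfl⟩; simp
    · obtain ⟨a, b⟩ := p; rintro ⟨rfl : a = b, rfl⟩; exact ⟨a, rfl, rfl⟩

theorem selL_transpose_mul_selU_apply (p q : Fin n × Fin n) :
    ((selL n)ᵀ * selU n) p q = if p.1 < p.2 ∧ q = (p.2, p.1) then 1 else 0 :=
  selection_transpose_mul_selection_apply (f := Subtype.val) Subtype.val_injective
    (fun k : LowIdx n => (k.val.2, k.val.1)) p q <| by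
    constructor
    · rintro ⟨k, rfl, rfl⟩; exact ⟨k.2, rfl⟩
    · rintro ⟨hp, rfl⟩; exact ⟨⟨p, hp⟩, rfl, rfl⟩

theorem selU_transpose_mul_selL_apply (p q : Fin n × Fin n) :
    ((selU n)ᵀ * selL n) p q = if p.2 < p.1 ∧ q = (p.2, p.1) then 1 else 0 :=
  selection_transpose_mul_selection_apply (f := fun k : LowIdx n => (k.val.2, k.val.1))
    (fun k l h => Subtype.ext (Prod.ext (Prod.ext_iff.mp h).2 (Prod.ext_iff.mp h).1))
    Subtype.val p q <| by
    constructor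
    · rintro ⟨k, rfl, rfl⟩; exact ⟨k.2, rfl⟩
    · rintro ⟨hp, rfl⟩; exact ⟨⟨(p.2, p.1), hp⟩, rfl, rfl⟩

end Commutation

theorem stmt_16 (n : ℕ) :
    commMat n = (selD n)ᵀ * selD n + (selL n)ᵀ * selU n + (selU n)ᵀ * selL n := by
  ext p q
  rw [Matrix.add_apply, Matrix.add_apply, selD_transpose_mul_selD_apply,
    selL_transpose_mul_selU_apply, selU_transpose_mul_selL_apply]
  rcases lt_trichotomy p.1 p.2 with h | h | h
  · simp [commMat, h, h.ne, h.not_gt]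
  · simp [commMat, h]
  · simp [commMat, h, h.ne', h.not_gt]
end
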